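/- Let V be a finite-dimensional real vector space, D ⊆ V ⊕ V* a Lagrangian subspace for the pairing ⟨(u,α),(v,β)⟩ = β(u) + α(v), and K ⊆ V a subspace. Set 𝒦 = K ⊕ {0} ⊆ V ⊕ V*, so 𝒦^⊥ = V ⊕ K° where K° is the annihilator of K. Then the subspace D̃ = ((D ∩ 𝒦^⊥) + 𝒦)/𝒦 of 𝒦^⊥/𝒦 satisfies D̃ = D̃^⊥ with respect to the symmetric bilinear form induced on 𝒦^⊥/𝒦 by the pairing on V ⊕ V*. -/

import Mathlib

/-!
Put `M = (D ∩ 𝒦^⊥) + 𝒦`. Since `D^⊥ = D` and the form is nondegenerate, `(D ∩ 𝒦^⊥)^⊥ = D + 𝒦`,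
so `M^⊥ = (D + 𝒦) ∩ 𝒦^⊥`, which is `M` again by the modular law because `𝒦 ⊆ 𝒦^⊥`.
A subspace of `𝒦^⊥` that is its own orthogonal stays so in `𝒦^⊥/𝒦`, since the induced form is
computed on representatives.
-/

open Module

/-- The canonical symmetric pairing on `V ⊕ V*`:
`⟨(u,α),(v,β)⟩ = β(u) + α(v)`. -/
noncomputable def pairingForm (V : Type*) [AddCommGroup V] [Module ℝ V] :
    LinearMap.BilinForm ℝ (V × Module.Dual ℝ V) :=
  LinearMap.mk₂ ℝ (fun p q => q.2 p.1 + p.2 q.1)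
    (fun p p' q => by
      simp only [Prod.fst_add, Prod.snd_add, map_add, LinearMap.add_apply]; ring)
    (fun c p q => by
      simp only [Prod.smul_fst, Prod.smul_snd, map_smul, LinearMap.smul_apply,
        smul_eq_mul]; ring)
    (fun p q q' => by
      simp only [Prod.fst_add, Prod.snd_add, map_add, LinearMap.add_apply]; ring)
    (fun p c q => by
      simp only [Prod.smul_fst, Prod.smul_snd, map_smul, LinearMap.smul_apply,
        smul_eq_mul]; ring)


variable (V : Type*) [AddCommGroup V] [Module ℝ V]

/-- `𝒦 = K ⊕ {0} ⊆ V ⊕ V*`. -/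
noncomputable def Kdirac (K : Submodule ℝ V) : Submodule ℝ (V × Module.Dual ℝ V) :=
  K.prod ⊥

/-- `𝒦^⊥ = V ⊕ K°`, the orthogonal of `𝒦` for the canonical pairing. -/
noncomputable def KdiracPerp (K : Submodule ℝ V) : Submodule ℝ (V × Module.Dual ℝ V) :=
  (⊤ : Submodule ℝ V).prod K.dualAnnihilator

/-- The reduced subspace `D̃ = ((D ∩ 𝒦^⊥) + 𝒦)/𝒦`, realized as a submodule of
the quotient `(V ⊕ V*)/𝒦`; it is contained in `𝒦^⊥/𝒦`. -/
noncomputable def Dtilde (D : Submodule ℝ (V × Module.Dual ℝ V)) (K : Submodule ℝ V) :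
    Submodule ℝ ((V × Module.Dual ℝ V) ⧸ Kdirac V K) :=
  ((D ⊓ KdiracPerp V K) ⊔ Kdirac V K).map (Kdirac V K).mkQ

namespace LinearMap.BilinForm

section CommSemiring

variable {R M : Type*} [CommSemiring R] [AddCommMonoid M] [Module R M]

theorem orthogonal_sup (B : LinearMap.BilinForm R M) (A C : Submodule R M) :
    B.orthogonal (A ⊔ C) = B.orthogonal A ⊓ B.orthogonal C := by
  refine le_antisymm (le_inf (orthogonal_le le_sup_left) (orthogonal_le le_sup_right)) ?_
  rintro m ⟨hA, hC⟩ n hn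
  obtain ⟨a, ha, c, hc, rfl⟩ := Submodule.mem_sup.mp hn
  rw [map_add, LinearMap.add_apply, hA a ha, hC c hc, add_zero]

end CommSemiring

section Field

variable {K V : Type*} [Field K] [AddCommGroup V] [Module K V] [FiniteDimensional K V]
  {B : LinearMap.BilinForm K V}

theorem orthogonal_inf (hB : B.Nondegenerate) (hB₀ : B.IsRefl) (A C : Submodule K V) :
    B.orthogonal (A ⊓ C) = B.orthogonal A ⊔ B.orthogonal C := by
  conv_lhs => rw [← orthogonal_orthogonal hB hB₀ A, ← orthogonal_orthogonal hB hB₀ C,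
    ← orthogonal_sup, orthogonal_orthogonal hB hB₀]

theorem orthogonal_inf_orthogonal_sup_eq_self (hB : B.Nondegenerate) (hB₀ : B.IsRefl)
    {D W : Submodule K V} (hD : B.orthogonal D = D) (hW : W ≤ B.orthogonal W) :
    B.orthogonal (D ⊓ B.orthogonal W ⊔ W) = D ⊓ B.orthogonal W ⊔ W := by
  calc B.orthogonal (D ⊓ B.orthogonal W ⊔ W)
      = (D ⊔ W) ⊓ B.orthogonal W := by
        rw [orthogonal_sup, orthogonal_inf hB hB₀, hD, orthogonal_orthogonal hB hB₀]
    _ = D ⊓ B.orthogonal W ⊔ W := by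
        rw [sup_comm, sup_inf_assoc_of_le D hW, sup_comm]

end Field

variable {R M : Type*} [CommRing R] [AddCommGroup M] [Module R M]

theorem map_mkQ_eq_inf_orthogonal_of_orthogonal_eq {B : LinearMap.BilinForm R M}
    {N P M₀ : Submodule R M} {Bbar : LinearMap.BilinForm R (M ⧸ N)}
    (hBbar : ∀ x ∈ P, ∀ y ∈ P, Bbar (N.mkQ x) (N.mkQ y) = B x y)
    (hM₀P : M₀ ≤ P) (hM₀ : B.orthogonal M₀ = M₀) :
    M₀.map N.mkQ = P.map N.mkQ ⊓ Bbar.orthogonal (M₀.map N.mkQ) := by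
  have orthogonal_iff {x : M} (hx : x ∈ P) :
      N.mkQ x ∈ Bbar.orthogonal (M₀.map N.mkQ) ↔ x ∈ B.orthogonal M₀ := by
    simp only [mem_orthogonal_iff, Submodule.mem_map, forall_exists_index, and_imp,
      forall_apply_eq_imp_iff₂]
    exact forall₂_congr fun y hy => by rw [hBbar y (hM₀P hy) x hx]
  ext z
  constructor
  · rintro ⟨x, hx, rfl⟩
    exact ⟨⟨x, hM₀P hx, rfl⟩, (orthogonal_iff (hM₀P hx)).mpr (hM₀.symm ▸ hx)⟩
  · rintro ⟨⟨x, hxP, rfl⟩, hz⟩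
    exact ⟨x, hM₀ ▸ (orthogonal_iff hxP).mp hz, rfl⟩

end LinearMap.BilinForm

open LinearMap.BilinForm

lemma pairingForm_apply {V : Type*} [AddCommGroup V] [Module ℝ V]
    (p q : V × Module.Dual ℝ V) : pairingForm V p q = q.2 p.1 + p.2 q.1 := rfl

lemma pairingForm_isRefl : (pairingForm V).IsRefl := by
  intro x y h
  rw [pairingForm_apply] at h ⊢
  linarith

lemma pairingForm_nondegenerate : (pairingForm V).Nondegenerate := by
  refine (pairingForm_isRefl V).nondegenerate_iff_separatingLeft.mpr fun x hx => ?_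
  have hx₂ : x.2 = 0 := LinearMap.ext fun v => by simpa [pairingForm_apply] using hx (v, 0)
  have hx₁ : x.1 = 0 := (Module.forall_dual_apply_eq_zero_iff ℝ x.1).mp fun φ => by
    simpa [pairingForm_apply] using hx (0, φ)
  exact Prod.ext hx₁ hx₂

lemma pairingForm_orthogonal_Kdirac (K : Submodule ℝ V) :
    (pairingForm V).orthogonal (Kdirac V K) = KdiracPerp V K := by
  ext x
  simp only [mem_orthogonal_iff, KdiracPerp, Kdirac, Submodule.mem_prod, Submodule.mem_top,
    true_and, Submodule.mem_bot, Submodule.mem_dualAnnihilator, pairingForm_apply, and_imp,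
    Prod.forall]
  exact ⟨fun h u hu => by simpa using h u 0 hu rfl,
    fun h u α hu hα => by simp [hα, h u hu]⟩

lemma Kdirac_le_KdiracPerp (K : Submodule ℝ V) : Kdirac V K ≤ KdiracPerp V K := by
  rintro ⟨u, α⟩ ⟨-, hα⟩
  obtain rfl : α = 0 := hα
  exact ⟨Submodule.mem_top, zero_mem _⟩

/-- for a Lagrangian `D ⊆ V ⊕ V*` and a subspace `K ⊆ V`, the
subspace `D̃ = ((D ∩ 𝒦^⊥) + 𝒦)/𝒦` of `𝒦^⊥/𝒦` satisfies `D̃ = D̃^⊥` for the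
symmetric bilinear form induced on `𝒦^⊥/𝒦` by the canonical pairing.  (Here
`B̄` is any bilinear form on the quotient that descends the pairing on `𝒦^⊥`,
and the orthogonal complement of `D̃` is taken inside `𝒦^⊥/𝒦`.) -/
theorem Dtilde_isLagrangian
    [FiniteDimensional ℝ V]
    (D : Submodule ℝ (V × Module.Dual ℝ V))
    (hD : D = (pairingForm V).orthogonal D)
    (K : Submodule ℝ V)
    (Bbar : LinearMap.BilinForm ℝ ((V × Module.Dual ℝ V) ⧸ Kdirac V K))
    (hBbar : ∀ x ∈ KdiracPerp V K, ∀ y ∈ KdiracPerp V K,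
      Bbar ((Kdirac V K).mkQ x) ((Kdirac V K).mkQ y) = pairingForm V x y) :
    Dtilde V D K
      = ((KdiracPerp V K).map (Kdirac V K).mkQ) ⊓ Bbar.orthogonal (Dtilde V D K) := by
  have hM : (pairingForm V).orthogonal (D ⊓ KdiracPerp V K ⊔ Kdirac V K)
      = D ⊓ KdiracPerp V K ⊔ Kdirac V K := by
    rw [← pairingForm_orthogonal_Kdirac]
    exact orthogonal_inf_orthogonal_sup_eq_self (pairingForm_nondegenerate V)
      (pairingForm_isRefl V) hD.symm
      ((pairingForm_orthogonal_Kdirac V K).symm ▸ Kdirac_le_KdiracPerp V K)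
  exact map_mkQ_eq_inf_orthogonal_of_orthogonal_eq hBbar
    (sup_le inf_le_right (Kdirac_le_KdiracPerp V K)) hM
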